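/- arXiv:1106.1884 — 4 statements merged into one kernel-verified Lean document; each statement's English description precedes it below -/
import Mathlib

section
/- Let n be a prime and let V = V1 x V2 where V1, V2 are 2-dimensional symplectic Z/nZ-vector spaces, with the symplectic form on V equal to the orthogonal sum of the forms on V1 and V2. Then every Lagrangian (maximally isotropic) subspace G of V is either of the form C1 x C2 with Ci a 1-dimensional subspace of Vi, or is the graph of an anti-isometry psi: V1 -> V2 (i.e., a linear isomorphism with e2(psi(P), psi(Q)) = -e1(P,Q) for all P,Q). -/
variable {k M M' : Type*} [Field k] [AddCommGroup M] [AddCommGroup M']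
  [Module k M] [Module k M']

/-- A product of submodules is isomorphic to the product of the submodules. -/
noncomputable def subProdEquiv (p : Submodule k M) (q : Submodule k M') :
    (p.prod q) ≃ₗ[k] p × q where
  toFun x := (⟨(x : M × M').1, x.2.1⟩, ⟨(x : M × M').2, x.2.2⟩)
  invFun y := ⟨(y.1.1, y.2.1), ⟨y.1.2, y.2.2⟩⟩
  map_add' _ _ := rfl
  map_smul' _ _ := rfl
  left_inv _ := rfl
  right_inv _ := rfl

lemma finrank_sub_prod [FiniteDimensional k M] [FiniteDimensional k M']
    (p : Submodule k M) (q : Submodule k M') :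
    Module.finrank k (p.prod q) = Module.finrank k p + Module.finrank k q := by
  rw [(subProdEquiv p q).finrank_eq, Module.finrank_prod]

lemma finrank_ker_funct [FiniteDimensional k M] (hd : Module.finrank k M = 2)
    (φ : M →ₗ[k] k) (hφ : φ ≠ 0) : Module.finrank k (LinearMap.ker φ) = 1 := by
  have h := LinearMap.finrank_range_add_finrank_ker φ
  have hr : Module.finrank k (LinearMap.range φ) = 1 := by
    have hle : Module.finrank k (LinearMap.range φ) ≤ 1 := by
      simpa using Submodule.finrank_le (LinearMap.range φ)
    have hne : LinearMap.range φ ≠ ⊥ := by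
      simpa [LinearMap.range_eq_bot] using hφ
    have := Submodule.one_le_finrank_iff.mpr hne
    omega
  omega

/-- For a prime `n` and `V = V1 × V2` an orthogonal sum of two
2-dimensional symplectic `ℤ/nℤ`-vector spaces, every Lagrangian (i.e. 2-dimensional
isotropic, equivalently maximally isotropic) subspace `G` of `V` is either a product
`C1 × C2` of 1-dimensional subspaces, or the graph of an anti-isometry `ψ : V1 → V2`. -/
theorem lagrangian_is_product_or_graph_of_anti_isometry
    (n : ℕ) (hn : n.Prime) [Fact n.Prime]
    (V1 V2 : Type) [AddCommGroup V1] [AddCommGroup V2]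
    [Module (ZMod n) V1] [Module (ZMod n) V2]
    (hd1 : Module.finrank (ZMod n) V1 = 2) (hd2 : Module.finrank (ZMod n) V2 = 2)
    (e1 : V1 →ₗ[ZMod n] V1 →ₗ[ZMod n] ZMod n)
    (e2 : V2 →ₗ[ZMod n] V2 →ₗ[ZMod n] ZMod n)
    (halt1 : ∀ v, e1 v v = 0) (halt2 : ∀ v, e2 v v = 0)
    (hnd1 : ∀ v, (∀ w, e1 v w = 0) → v = 0)
    (hnd2 : ∀ v, (∀ w, e2 v w = 0) → v = 0)
    (G : Submodule (ZMod n) (V1 × V2))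
    (hGdim : Module.finrank (ZMod n) G = 2)
    (hGiso : ∀ u ∈ G, ∀ v ∈ G, e1 u.1 v.1 + e2 u.2 v.2 = 0) :
    (∃ (C1 : Submodule (ZMod n) V1) (C2 : Submodule (ZMod n) V2),
        Module.finrank (ZMod n) C1 = 1 ∧ Module.finrank (ZMod n) C2 = 1 ∧
        G = C1.prod C2) ∨
    (∃ ψ : V1 ≃ₗ[ZMod n] V2,
        (∀ u v, e2 (ψ u) (ψ v) = - e1 u v) ∧
        G = LinearMap.graph (ψ : V1 →ₗ[ZMod n] V2)) := by
  haveI : FiniteDimensional (ZMod n) V1 := FiniteDimensional.of_finrank_pos (by omega)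
  haveI : FiniteDimensional (ZMod n) V2 := FiniteDimensional.of_finrank_pos (by omega)
  set f1 : G →ₗ[ZMod n] V1 := (LinearMap.fst (ZMod n) V1 V2).comp G.subtype with hf1
  set f2 : G →ₗ[ZMod n] V2 := (LinearMap.snd (ZMod n) V1 V2).comp G.subtype with hf2
  by_cases hker : LinearMap.ker f1 = ⊥
  · -- graph case
    right
    have hinj : Function.Injective f1 := LinearMap.ker_eq_bot.mp hker
    set E := f1.linearEquivOfInjective hinj (hGdim.trans hd1.symm) with hE
    set ψ : V1 →ₗ[ZMod n] V2 := f2 ∘ₗ (E.symm : V1 →ₗ[ZMod n] G) with hψ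
    have hEsymm : ∀ x : V1, ((E.symm x : G) : V1 × V2) = (x, ψ x) := by
      intro x
      have h1 : f1 (E.symm x) = x := by
        have := E.apply_symm_apply x
        rwa [hE, LinearMap.linearEquivOfInjective_apply] at this
      have h2 : f2 (E.symm x) = ψ x := rfl
      exact Prod.ext h1 h2
    have hmemG : ∀ x : V1, (x, ψ x) ∈ G := fun x => hEsymm x ▸ (E.symm x).2
    have hanti : ∀ u v : V1, e2 (ψ u) (ψ v) = - e1 u v := by
      intro u v
      have := hGiso (u, ψ u) (hmemG u) (v, ψ v) (hmemG v)
      simp only at this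
      exact eq_neg_of_add_eq_zero_left (by rwa [add_comm] at this)
    have hψinj : Function.Injective ψ := by
      rw [← LinearMap.ker_eq_bot, Submodule.eq_bot_iff]
      intro x hx
      simp only [LinearMap.mem_ker] at hx
      refine hnd1 x (fun w => ?_)
      have := hGiso (x, ψ x) (hmemG x) (w, ψ w) (hmemG w)
      simp only at this
      rw [hx] at this
      simpa using this
    set Ψ := ψ.linearEquivOfInjective hψinj (hd1.trans hd2.symm) with hΨ
    have hΨψ : (Ψ : V1 →ₗ[ZMod n] V2) = ψ := by
      ext x
      simp [hΨ, LinearMap.linearEquivOfInjective_apply]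
    refine ⟨Ψ, ?_, ?_⟩
    · intro u v
      have h1 : Ψ u = ψ u := by rw [hΨ, LinearMap.linearEquivOfInjective_apply]
      have h2 : Ψ v = ψ v := by rw [hΨ, LinearMap.linearEquivOfInjective_apply]
      rw [h1, h2]; exact hanti u v
    · rw [hΨψ]
      apply le_antisymm
      · intro g hg
        rw [LinearMap.mem_graph_iff]
        have : ψ g.1 = g.2 := by
          have h1 : f1 (⟨g, hg⟩ : G) = g.1 := rfl
          have h2 : E ⟨g, hg⟩ = g.1 := by
            rw [hE, LinearMap.linearEquivOfInjective_apply]; exact h1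
          have : E.symm g.1 = ⟨g, hg⟩ := by rw [← h2, E.symm_apply_apply]
          have h4 := congrArg (fun z : G => ((z : V1 × V2)).2) this
          simp only at h4
          rw [hEsymm g.1] at h4
          exact h4
        exact this.symm
      · intro g hg
        rw [LinearMap.mem_graph_iff] at hg
        have : g = (g.1, ψ g.1) := Prod.ext rfl hg
        rw [this]
        exact hmemG g.1
  · -- product case
    left
    -- there is a nonzero element of G with first coordinate zero
    obtain ⟨g, hgker, hgne⟩ := Submodule.exists_mem_ne_zero_of_ne_bot hker
    obtain ⟨gv, hgvG⟩ := g
    simp only [LinearMap.mem_ker, Submodule.mk_eq_zero, ne_eq] at hgker hgne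
    have hg1 : gv.1 = 0 := hgker
    have hw : gv.2 ≠ 0 := fun h => hgne (Prod.ext hg1 h)
    set w := gv.2 with hwdef
    -- every element of G pairs to zero with w in the second coordinate
    have hwperp : ∀ v ∈ G, e2 w v.2 = 0 := by
      intro v hv
      have := hGiso gv hgvG v hv
      rwa [hg1, map_zero, LinearMap.zero_apply, zero_add] at this
    have he2w : (e2 w : V2 →ₗ[ZMod n] ZMod n) ≠ 0 := by
      intro h
      exact hw (hnd2 w (fun x => by rw [h]; rfl))
    have hW : Module.finrank (ZMod n) (LinearMap.ker (e2 w)) = 1 :=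
      finrank_ker_funct hd2 _ he2w
    -- range of f2 lands in ker (e2 w), so ker f2 is nontrivial
    have hrange2 : LinearMap.range f2 ≤ LinearMap.ker (e2 w) := by
      rintro _ ⟨x, rfl⟩
      exact hwperp x x.2
    have hker2 : LinearMap.ker f2 ≠ ⊥ := by
      intro hbot
      have h := LinearMap.finrank_range_add_finrank_ker f2
      rw [hbot, finrank_bot, hGdim] at h
      have hle : Module.finrank (ZMod n) (LinearMap.range f2) ≤ 1 := by
        rw [← hW]
        exact Submodule.finrank_mono hrange2
      omega
    obtain ⟨g', hg'ker, hg'ne⟩ := Submodule.exists_mem_ne_zero_of_ne_bot hker2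
    obtain ⟨gv', hgv'G⟩ := g'
    simp only [LinearMap.mem_ker, Submodule.mk_eq_zero, ne_eq] at hg'ker hg'ne
    have hg'2 : gv'.2 = 0 := hg'ker
    have hu : gv'.1 ≠ 0 := fun h => hg'ne (Prod.ext h hg'2)
    set u := gv'.1 with hudef
    have huperp : ∀ v ∈ G, e1 u v.1 = 0 := by
      intro v hv
      have := hGiso gv' hgv'G v hv
      rwa [hg'2, map_zero, LinearMap.zero_apply, add_zero] at this
    have he1u : (e1 u : V1 →ₗ[ZMod n] ZMod n) ≠ 0 := by
      intro h
      exact hu (hnd1 u (fun x => by rw [h]; rfl))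
    have hU : Module.finrank (ZMod n) (LinearMap.ker (e1 u)) = 1 :=
      finrank_ker_funct hd1 _ he1u
    refine ⟨LinearMap.ker (e1 u), LinearMap.ker (e2 w), hU, hW, ?_⟩
    have hle : G ≤ (LinearMap.ker (e1 u)).prod (LinearMap.ker (e2 w)) := by
      intro v hv
      exact ⟨huperp v hv, hwperp v hv⟩
    refine (Submodule.eq_of_le_of_finrank_eq hle ?_).symm.symm
    rw [hGdim, finrank_sub_prod, hU, hW]
end

section
/- Let n be a prime and let V1, V2 be 2-dimensional symplectic vector spaces over Z/nZ. The number of Lagrangian subspaces of V1 x V2 of product form C1 x C2 is (n+1)^2 = n^2 + 2n + 1, the number that are graphs of anti-isometries V1 -> V2 is n^3 - n, and their sum equals (n^4-1)/(n-1), the total number of Lagrangian subspaces. -/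
/-!
A Lagrangian `G ≤ V₁ × V₂` meets `0 × V₂` trivially if and only if it meets `V₁ × 0` trivially:
if `G ∩ (0 × V₂) = 0`, the first projection is injective on `G`, hence onto `V₁` by dimension,
and then `(u, 0) ∈ G` is orthogonal to all of `V₁`. In that case both projections are bijective,
so `G` is the graph of an isomorphism, which isotropy forces to be an anti-isometry. Otherwise
`G` contains the product of the two nonzero isotropic lines `G ∩ V₁` and `G ∩ V₂`, and equals it
by dimension. Conversely every product of two lines is Lagrangian, giving `(q + 1)²` of them. An
anti-isometry is determined by the images `(a, c)` of a basis `b₀, b₁` with `e₁ b₀ b₁ = 1`, subject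
only to `e₂ a c = -1`: there are `q² - 1` choices of `a` and an affine line of `q` choices of `c`.
-/

open Module Function

namespace Submodule

def prodEquiv {R M N : Type*} [Semiring R] [AddCommMonoid M] [AddCommMonoid N] [Module R M]
    [Module R N] (p : Submodule R M) (q : Submodule R N) : p.prod q ≃ₗ[R] p × q where
  toFun x := (⟨x.1.1, x.2.1⟩, ⟨x.1.2, x.2.2⟩)
  invFun x := ⟨(x.1, x.2), x.1.2, x.2.2⟩
  map_add' _ _ := rfl
  map_smul' _ _ := rfl
  left_inv _ := rfl
  right_inv _ := rfl

section FiniteDimensional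

variable {K M N : Type*} [DivisionRing K] [AddCommGroup M] [AddCommGroup N] [Module K M]
  [Module K N] [FiniteDimensional K M] [FiniteDimensional K N]

theorem finrank_prod (p : Submodule K M) (q : Submodule K N) :
    finrank K (p.prod q) = finrank K p + finrank K q := by
  rw [(prodEquiv p q).finrank_eq, Module.finrank_prod]

theorem bijective_fst_of_comap_inr_eq_bot {G : Submodule K (M × N)}
    (hG : finrank K G = finrank K M) (hK : G.comap (LinearMap.inr K M N) = ⊥) :
    Bijective (Prod.fst ∘ G.subtype) := by
  have hinj : Injective (LinearMap.fst K M N ∘ₗ G.subtype) :=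
    (injective_iff_map_eq_zero _).2 fun g hg => by
      have h₂ : g.1.2 ∈ G.comap (LinearMap.inr K M N) := by simp [← hg]
      rw [hK, mem_bot] at h₂
      exact Subtype.ext (Prod.ext hg h₂)
  exact ⟨hinj, (LinearMap.injective_iff_surjective_of_finrank_eq_finrank hG).1 hinj⟩

theorem bijective_snd_of_comap_inl_eq_bot {G : Submodule K (M × N)}
    (hG : finrank K G = finrank K N) (hK : G.comap (LinearMap.inl K M N) = ⊥) :
    Bijective (Prod.snd ∘ G.subtype) := by
  have hinj : Injective (LinearMap.snd K M N ∘ₗ G.subtype) :=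
    (injective_iff_map_eq_zero _).2 fun g hg => by
      have h₁ : g.1.1 ∈ G.comap (LinearMap.inl K M N) := by simp [← hg]
      rw [hK, mem_bot] at h₁
      exact Subtype.ext (Prod.ext h₁ hg)
  exact ⟨hinj, (LinearMap.injective_iff_surjective_of_finrank_eq_finrank hG).1 hinj⟩

end FiniteDimensional

theorem natCard_finrank_eq_one_of_finrank_eq_two {F V : Type*} [Field F] [AddCommGroup V]
    [Module F V] [Finite F] (hd : finrank F V = 2) :
    Nat.card {C : Submodule F V // finrank F C = 1} = Nat.card F + 1 := by
  rw [← Nat.card_congr (Projectivization.equivSubmodule F V),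
    Projectivization.card_of_finrank_two F V hd]

end Submodule

theorem LinearMap.graph_ne_prod {R M N : Type*} [Semiring R] [AddCommMonoid M] [AddCommMonoid N]
    [Module R M] [Module R N] (f : M →ₗ[R] N) {p : Submodule R M} {q : Submodule R N}
    (hq : q ≠ ⊥) : f.graph ≠ p.prod q := by
  obtain ⟨y, hy, hy0⟩ := q.ne_bot_iff.1 hq
  intro h
  have : ((0, y) : M × N) ∈ f.graph := h ▸ ⟨p.zero_mem, hy⟩
  exact hy0 (by simpa using this)

theorem Module.Dual.natCard_fiber {F V : Type*} [Field F] [AddCommGroup V] [Module F V] [Finite F]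
    [FiniteDimensional F V] {f : Module.Dual F V} (hf : f ≠ 0) (c : F) :
    Nat.card {v // f v = c} = Nat.card F ^ (finrank F V - 1) := by
  rw [← f.finrank_ker_add_one_of_ne_zero hf, Nat.add_sub_cancel, ← Module.natCard_eq_pow_finrank]
  exact Nat.card_congr (AddMonoidHom.fiberEquivKerOfSurjective (f := f.toAddMonoidHom)
    (LinearMap.surjective hf) c)

section Form

variable {F V : Type*} [Field F] [AddCommGroup V] [Module F V] {e : V →ₗ[F] V →ₗ[F] F}

namespace LinearMap.IsAlt

theorem apply_eq_zero_of_finrank_eq_one (he : e.IsAlt) {C : Submodule F V}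
    (hC : finrank F C = 1) {u v : V} (hu : u ∈ C) (hv : v ∈ C) : e u v = 0 := by
  obtain ⟨x, -, hx⟩ := finrank_eq_one_iff'.1 hC
  obtain ⟨a, ha⟩ := hx ⟨u, hu⟩
  obtain ⟨b, hb⟩ := hx ⟨v, hv⟩
  obtain rfl : a • (x : V) = u := congrArg Subtype.val ha
  obtain rfl : b • (x : V) = v := congrArg Subtype.val hb
  simp [he.self_eq_zero]

theorem apply_eq_repr_mul (he : e.IsAlt) (b : Basis (Fin 2) F V) (u v : V) :
    e u v = (b.repr u 0 * b.repr v 1 - b.repr u 1 * b.repr v 0) * e (b 0) (b 1) := by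
  conv_lhs => rw [← b.sum_repr u, ← b.sum_repr v]
  simp only [Fin.sum_univ_two, map_add, map_smul, LinearMap.add_apply, LinearMap.smul_apply,
    smul_eq_mul, he.self_eq_zero, ← he.neg (b 1)]
  ring

theorem exists_basis_apply_eq_one (he : e.IsAlt) (hd : finrank F V = 2) (hs : e.SeparatingLeft) :
    ∃ b : Basis (Fin 2) F V, e (b 0) (b 1) = 1 := by
  have : Nontrivial V := nontrivial_of_finrank_pos (R := F) (by omega)
  obtain ⟨x, hx⟩ := exists_ne (0 : V)
  obtain ⟨w, hw⟩ : ∃ w, e x w ≠ 0 := by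
    by_contra! h
    exact hx (hs x h)
  obtain ⟨y, hxy⟩ : ∃ y, e x y = 1 := ⟨(e x w)⁻¹ • w, by simp [hw]⟩
  have hy : y ≠ 0 := by rintro rfl; simp at hxy
  have hli : LinearIndependent F ![x, y] := by
    refine LinearIndependent.pair_iff.2 fun s t hst => ?_
    obtain rfl : s = 0 := by
      simpa [hxy, he.self_eq_zero] using congrArg (e · y) hst
    simpa [hy] using hst
  refine ⟨basisOfLinearIndependentOfCardEqFinrank hli (by simp [hd]), ?_⟩
  simpa using hxy

end LinearMap.IsAlt

namespace LinearMap.SeparatingLeft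

variable (hs : e.SeparatingLeft) (hd : finrank F V = 2)
include hs hd

theorem finrank_le_one_of_isotropic {C : Submodule F V} (hC : ∀ u ∈ C, ∀ v ∈ C, e u v = 0) :
    finrank F C ≤ 1 := by
  have := Module.finite_of_finrank_eq_succ hd
  by_contra! h
  have htop : C = ⊤ := Submodule.eq_top_of_finrank_eq (by linarith [C.finrank_le])
  have hmem (x : V) : x ∈ C := htop ▸ Submodule.mem_top
  have : Subsingleton V :=
    subsingleton_of_forall_eq 0 fun x => hs x fun w => hC x (hmem x) w (hmem w)
  simp [finrank_zero_of_subsingleton] at hd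

theorem natCard_apply_eq [Finite F] {c : F} (hc : c ≠ 0) :
    Nat.card {p : V × V // e p.1 p.2 = c} = (Nat.card F ^ 2 - 1) * Nat.card F := by
  classical
  have := Module.finite_of_finrank_eq_succ hd
  have : Finite V := Module.finite_of_finite F
  have : Fintype V := Fintype.ofFinite V
  have hfiber (a : V) : Nat.card {b // e a b = c} = if a = 0 then 0 else Nat.card F := by
    split_ifs with ha
    · subst ha
      simp [hc.symm]
    · rw [Module.Dual.natCard_fiber (fun h => ha (hs a fun w => by simp [h])), hd, pow_one]
  rw [Nat.card_congr (Equiv.subtypeProdEquivSigmaSubtype fun a b => e a b = c), Nat.card_sigma]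
  simp only [hfiber, Finset.sum_ite, Finset.sum_const_zero, zero_add, Finset.sum_const,
    smul_eq_mul]
  rw [Finset.filter_ne', Finset.card_erase_of_mem (Finset.mem_univ _), Finset.card_univ,
    ← Nat.card_eq_fintype_card, Module.natCard_eq_pow_finrank (K := F), hd]

end LinearMap.SeparatingLeft

end Form

section AntiIsometry

variable {F V₁ V₂ : Type*} [Field F] [AddCommGroup V₁] [Module F V₁] [AddCommGroup V₂]
  [Module F V₂] {e₁ : V₁ →ₗ[F] V₁ →ₗ[F] F} {e₂ : V₂ →ₗ[F] V₂ →ₗ[F] F}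

theorem antiIsometry_iff_apply_basis (he₁ : e₁.IsAlt) (he₂ : e₂.IsAlt) {b : Basis (Fin 2) F V₁}
    (hb : e₁ (b 0) (b 1) = 1) (f : V₁ →ₗ[F] V₂) :
    (∀ u v, e₂ (f u) (f v) = -e₁ u v) ↔ e₂ (f (b 0)) (f (b 1)) = -1 := by
  refine ⟨fun h => by rw [h, hb], fun h u v => ?_⟩
  have he : (e₂.compl₁₂ f f).IsAlt := fun x => he₂ (f x)
  rw [← LinearMap.compl₁₂_apply, he.apply_eq_repr_mul b, he₁.apply_eq_repr_mul b]
  simp only [LinearMap.compl₁₂_apply, h, hb]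
  ring

theorem injective_of_antiIsometry (hs₁ : e₁.SeparatingLeft) {f : V₁ →ₗ[F] V₂}
    (hf : ∀ u v, e₂ (f u) (f v) = -e₁ u v) : Injective f :=
  (injective_iff_map_eq_zero f).2 fun u hu =>
    hs₁ u fun v => neg_eq_zero.1 (by rw [← hf, hu, map_zero, LinearMap.zero_apply])

theorem natCard_antiIsometries [Finite F] (hd₁ : finrank F V₁ = 2) (hd₂ : finrank F V₂ = 2)
    (he₁ : e₁.IsAlt) (he₂ : e₂.IsAlt) (hs₁ : e₁.SeparatingLeft) (hs₂ : e₂.SeparatingLeft) :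
    Nat.card {ψ : V₁ ≃ₗ[F] V₂ // ∀ u v, e₂ (ψ u) (ψ v) = -e₁ u v} =
      (Nat.card F ^ 2 - 1) * Nat.card F := by
  obtain ⟨b, hb⟩ := he₁.exists_basis_apply_eq_one hd₁ hs₁
  have := Module.finite_of_finrank_eq_succ hd₁
  have := Module.finite_of_finrank_eq_succ hd₂
  rw [← hs₂.natCard_apply_eq hd₂ (neg_ne_zero.2 one_ne_zero)]
  refine Nat.card_eq_of_bijective (fun ψ => ⟨(ψ.1 (b 0), ψ.1 (b 1)),
    (antiIsometry_iff_apply_basis he₁ he₂ hb ψ.1.toLinearMap).1 ψ.2⟩) ⟨fun ψ ψ' h => ?_, ?_⟩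
  · have h₀ : ψ.1 (b 0) = ψ'.1 (b 0) := congrArg (·.1.1) h
    have h₁ : ψ.1 (b 1) = ψ'.1 (b 1) := congrArg (·.1.2) h
    refine Subtype.ext (LinearEquiv.toLinearMap_injective (b.ext fun i => ?_))
    fin_cases i
    exacts [h₀, h₁]
  · rintro ⟨⟨x, y⟩, hxy⟩
    have hf : ∀ u v, e₂ (b.constr F ![x, y] u) (b.constr F ![x, y] v) = -e₁ u v :=
      (antiIsometry_iff_apply_basis he₁ he₂ hb _).2 (by simpa using hxy)
    refine ⟨⟨LinearMap.linearEquivOfInjective _ (injective_of_antiIsometry hs₁ hf)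
      (hd₁.trans hd₂.symm), hf⟩, ?_⟩
    simp

end AntiIsometry

section Lagrangian

variable {F V₁ V₂ : Type*} [Field F] [AddCommGroup V₁] [Module F V₁] [AddCommGroup V₂]
  [Module F V₂] {e₁ : V₁ →ₗ[F] V₁ →ₗ[F] F} {e₂ : V₂ →ₗ[F] V₂ →ₗ[F] F}

variable (e₁ e₂) in
def IsIsotropic (G : Submodule F (V₁ × V₂)) : Prop :=
  ∀ u ∈ G, ∀ v ∈ G, e₁ u.1 v.1 + e₂ u.2 v.2 = 0

theorem IsIsotropic.comap_inl_eq_bot {G : Submodule F (V₁ × V₂)} (hG : IsIsotropic e₁ e₂ G)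
    (hs₁ : e₁.SeparatingLeft) (hsurj : Surjective (Prod.fst ∘ G.subtype)) :
    G.comap (LinearMap.inl F V₁ V₂) = ⊥ := by
  refine (Submodule.eq_bot_iff _).2 fun u hu => hs₁ u fun w => ?_
  obtain ⟨g, rfl⟩ := hsurj w
  simpa using hG _ hu g g.2

theorem IsIsotropic.comap_inr_eq_bot {G : Submodule F (V₁ × V₂)} (hG : IsIsotropic e₁ e₂ G)
    (hs₂ : e₂.SeparatingLeft) (hsurj : Surjective (Prod.snd ∘ G.subtype)) :
    G.comap (LinearMap.inr F V₁ V₂) = ⊥ := by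
  refine (Submodule.eq_bot_iff _).2 fun u hu => hs₂ u fun w => ?_
  obtain ⟨g, rfl⟩ := hsurj w
  simpa using hG _ hu g g.2

theorem IsIsotropic.exists_eq_prod_or_eq_graph (hd₁ : finrank F V₁ = 2) (hd₂ : finrank F V₂ = 2)
    (hs₁ : e₁.SeparatingLeft) (hs₂ : e₂.SeparatingLeft) {G : Submodule F (V₁ × V₂)}
    (hG₂ : finrank F G = 2) (hG : IsIsotropic e₁ e₂ G) :
    (∃ (C₁ : Submodule F V₁) (C₂ : Submodule F V₂), G = C₁.prod C₂) ∨
      ∃ ψ : V₁ ≃ₗ[F] V₂, (∀ u v, e₂ (ψ u) (ψ v) = -e₁ u v) ∧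
        G = LinearMap.graph (ψ : V₁ →ₗ[F] V₂) := by
  have := Module.finite_of_finrank_eq_succ hd₁
  have := Module.finite_of_finrank_eq_succ hd₂
  by_cases hK₂ : G.comap (LinearMap.inr F V₁ V₂) = ⊥
  · right
    have hbij₁ := G.bijective_fst_of_comap_inr_eq_bot (hG₂.trans hd₁.symm) hK₂
    have hbij₂ := G.bijective_snd_of_comap_inl_eq_bot (hG₂.trans hd₂.symm)
      (hG.comap_inl_eq_bot hs₁ hbij₁.2)
    obtain ⟨ψ, hψ⟩ := G.exists_equiv_eq_graph hbij₁ hbij₂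
    refine ⟨ψ, fun u v => eq_neg_of_add_eq_zero_right (hG (u, ψ u) ?_ (v, ψ v) ?_), hψ⟩ <;>
      exact hψ ▸ (LinearMap.mem_graph_iff _ _).2 rfl
  · left
    have hK₁ : G.comap (LinearMap.inl F V₁ V₂) ≠ ⊥ := fun hK₁ => hK₂ <| hG.comap_inr_eq_bot hs₂
      (G.bijective_snd_of_comap_inl_eq_bot (hG₂.trans hd₂.symm) hK₁).2
    have hle := (Submodule.prod_le_iff ..).2 ⟨G.map_comap_le (LinearMap.inl F V₁ V₂),
      G.map_comap_le (LinearMap.inr F V₁ V₂)⟩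
    refine ⟨_, _, (Submodule.eq_of_le_of_finrank_le hle ?_).symm⟩
    rw [Submodule.finrank_prod, hG₂]
    have := Submodule.one_le_finrank_iff.2 hK₁
    have := Submodule.one_le_finrank_iff.2 hK₂
    omega

theorem finrank_prod_eq_two_and_isIsotropic_iff (hd₁ : finrank F V₁ = 2) (hd₂ : finrank F V₂ = 2)
    (he₁ : e₁.IsAlt) (he₂ : e₂.IsAlt) (hs₁ : e₁.SeparatingLeft) (hs₂ : e₂.SeparatingLeft)
    {C₁ : Submodule F V₁} {C₂ : Submodule F V₂} :
    finrank F (C₁.prod C₂) = 2 ∧ IsIsotropic e₁ e₂ (C₁.prod C₂) ↔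
      finrank F C₁ = 1 ∧ finrank F C₂ = 1 := by
  have := Module.finite_of_finrank_eq_succ hd₁
  have := Module.finite_of_finrank_eq_succ hd₂
  rw [Submodule.finrank_prod]
  refine ⟨fun ⟨hsum, hiso⟩ => ?_, fun ⟨h₁, h₂⟩ => ⟨by rw [h₁, h₂], fun u hu v hv => ?_⟩⟩
  · have h₁ := hs₁.finrank_le_one_of_isotropic hd₁ fun u hu v hv => by
      simpa using hiso (u, 0) ⟨hu, C₂.zero_mem⟩ (v, 0) ⟨hv, C₂.zero_mem⟩
    have h₂ := hs₂.finrank_le_one_of_isotropic hd₂ fun u hu v hv => by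
      simpa using hiso (0, u) ⟨C₁.zero_mem, hu⟩ (0, v) ⟨C₁.zero_mem, hv⟩
    omega
  · rw [he₁.apply_eq_zero_of_finrank_eq_one h₁ hu.1 hv.1,
      he₂.apply_eq_zero_of_finrank_eq_one h₂ hu.2 hv.2, add_zero]

theorem natCard_prod_lagrangians [Finite F] (hd₁ : finrank F V₁ = 2) (hd₂ : finrank F V₂ = 2)
    (he₁ : e₁.IsAlt) (he₂ : e₂.IsAlt) (hs₁ : e₁.SeparatingLeft) (hs₂ : e₂.SeparatingLeft) :
    Nat.card {G : Submodule F (V₁ × V₂) // finrank F G = 2 ∧ IsIsotropic e₁ e₂ G ∧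
      ∃ (C₁ : Submodule F V₁) (C₂ : Submodule F V₂), G = C₁.prod C₂} = (Nat.card F + 1) ^ 2 := by
  nth_rw 1 [sq, ← Submodule.natCard_finrank_eq_one_of_finrank_eq_two hd₁]
  rw [← Submodule.natCard_finrank_eq_one_of_finrank_eq_two hd₂, ← Nat.card_prod]
  symm
  refine Nat.card_eq_of_bijective (fun C => ⟨C.1.1.prod C.2.1, and_assoc.1
    ⟨(finrank_prod_eq_two_and_isIsotropic_iff hd₁ hd₂ he₁ he₂ hs₁ hs₂).2 ⟨C.1.2, C.2.2⟩, _, _,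
      rfl⟩⟩) ⟨fun C C' h => ?_, ?_⟩
  · have h' : C.1.1.prod C.2.1 = C'.1.1.prod C'.2.1 := congrArg Subtype.val h
    refine Prod.ext (Subtype.ext ?_) (Subtype.ext ?_)
    · simpa only [Submodule.prod_comap_inl] using congrArg (·.comap (LinearMap.inl F V₁ V₂)) h'
    · simpa only [Submodule.prod_comap_inr] using congrArg (·.comap (LinearMap.inr F V₁ V₂)) h'
  · rintro ⟨G, hG₂, hGiso, C₁, C₂, rfl⟩
    obtain ⟨h₁, h₂⟩ :=
      (finrank_prod_eq_two_and_isIsotropic_iff hd₁ hd₂ he₁ he₂ hs₁ hs₂).1 ⟨hG₂, hGiso⟩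
    exact ⟨(⟨C₁, h₁⟩, ⟨C₂, h₂⟩), rfl⟩

theorem finrank_graph_eq_two_and_isIsotropic (hd₁ : finrank F V₁ = 2) {f : V₁ →ₗ[F] V₂}
    (hf : ∀ u v, e₂ (f u) (f v) = -e₁ u v) :
    finrank F f.graph = 2 ∧ IsIsotropic e₁ e₂ f.graph := by
  refine ⟨?_, fun u hu v hv => ?_⟩
  · rw [LinearMap.graph_eq_range_prod, LinearMap.finrank_range_of_inj, hd₁]
    exact fun x y h => congrArg Prod.fst h
  · rw [(LinearMap.mem_graph_iff _ _).1 hu, (LinearMap.mem_graph_iff _ _).1 hv, hf,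
      add_neg_cancel]

theorem natCard_graph_lagrangians [Finite F] (hd₁ : finrank F V₁ = 2) (hd₂ : finrank F V₂ = 2)
    (he₁ : e₁.IsAlt) (he₂ : e₂.IsAlt) (hs₁ : e₁.SeparatingLeft) (hs₂ : e₂.SeparatingLeft) :
    Nat.card {G : Submodule F (V₁ × V₂) // finrank F G = 2 ∧ IsIsotropic e₁ e₂ G ∧
      ∃ ψ : V₁ ≃ₗ[F] V₂, (∀ u v, e₂ (ψ u) (ψ v) = -e₁ u v) ∧
        G = LinearMap.graph (ψ : V₁ →ₗ[F] V₂)} = (Nat.card F ^ 2 - 1) * Nat.card F := by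
  rw [← natCard_antiIsometries hd₁ hd₂ he₁ he₂ hs₁ hs₂]
  symm
  refine Nat.card_eq_of_bijective (fun ψ => ⟨LinearMap.graph (ψ.1 : V₁ →ₗ[F] V₂), and_assoc.1
    ⟨finrank_graph_eq_two_and_isIsotropic hd₁ ψ.2, ψ.1, ψ.2, rfl⟩⟩) ⟨fun ψ ψ' h => ?_, ?_⟩
  · have h' : LinearMap.graph (ψ.1 : V₁ →ₗ[F] V₂) = LinearMap.graph (ψ'.1 : V₁ →ₗ[F] V₂) :=
      congrArg Subtype.val h
    refine Subtype.ext (LinearEquiv.ext fun x => ?_)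
    have hx : ((x, ψ.1 x) : V₁ × V₂) ∈ LinearMap.graph (ψ'.1 : V₁ →ₗ[F] V₂) :=
      h' ▸ (LinearMap.mem_graph_iff _ _).2 rfl
    exact (LinearMap.mem_graph_iff _ _).1 hx
  · rintro ⟨G, -, -, ψ, hψ, rfl⟩
    exact ⟨⟨ψ, hψ⟩, rfl⟩

theorem natCard_lagrangians [Finite F] (hd₁ : finrank F V₁ = 2) (hd₂ : finrank F V₂ = 2)
    (he₁ : e₁.IsAlt) (he₂ : e₂.IsAlt) (hs₁ : e₁.SeparatingLeft) (hs₂ : e₂.SeparatingLeft) :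
    Nat.card {G : Submodule F (V₁ × V₂) // finrank F G = 2 ∧ IsIsotropic e₁ e₂ G} =
      (Nat.card F + 1) ^ 2 + (Nat.card F ^ 2 - 1) * Nat.card F := by
  classical
  have := Module.finite_of_finrank_eq_succ hd₁
  have := Module.finite_of_finrank_eq_succ hd₂
  have : Finite (V₁ × V₂) := Module.finite_of_finite F
  have : Finite (Submodule F (V₁ × V₂)) := Finite.of_injective _ SetLike.coe_injective
  let P (G : Submodule F (V₁ × V₂)) : Prop := finrank F G = 2 ∧ IsIsotropic e₁ e₂ G ∧
    ∃ (C₁ : Submodule F V₁) (C₂ : Submodule F V₂), G = C₁.prod C₂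
  let Q (G : Submodule F (V₁ × V₂)) : Prop := finrank F G = 2 ∧ IsIsotropic e₁ e₂ G ∧
    ∃ ψ : V₁ ≃ₗ[F] V₂, (∀ u v, e₂ (ψ u) (ψ v) = -e₁ u v) ∧ G = LinearMap.graph (ψ : V₁ →ₗ[F] V₂)
  have hdisj : Disjoint P Q := by
    refine Pi.disjoint_iff.2 fun G => Prop.disjoint_iff.2 ?_
    rintro ⟨⟨hG₂, hG, C₁, C₂, rfl⟩, -, -, ψ, -, hψ⟩
    have hC₂ := ((finrank_prod_eq_two_and_isIsotropic_iff hd₁ hd₂ he₁ he₂ hs₁ hs₂).1 ⟨hG₂, hG⟩).2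
    refine LinearMap.graph_ne_prod _ (fun h => ?_) hψ.symm
    rw [h, finrank_bot] at hC₂
    exact zero_ne_one hC₂
  have hsplit (G : Submodule F (V₁ × V₂)) : finrank F G = 2 ∧ IsIsotropic e₁ e₂ G ↔ P G ∨ Q G :=
    ⟨fun ⟨hG₂, hG⟩ => (hG.exists_eq_prod_or_eq_graph hd₁ hd₂ hs₁ hs₂ hG₂).imp
      (⟨hG₂, hG, ·⟩) (⟨hG₂, hG, ·⟩), by rintro (⟨hG₂, hG, -⟩ | ⟨hG₂, hG, -⟩) <;> exact ⟨hG₂, hG⟩⟩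
  rw [Nat.card_congr ((Equiv.subtypeEquivRight hsplit).trans (subtypeOrEquiv P Q hdisj)),
    Nat.card_sum, natCard_prod_lagrangians hd₁ hd₂ he₁ he₂ hs₁ hs₂,
    natCard_graph_lagrangians hd₁ hd₂ he₁ he₂ hs₁ hs₂]

end Lagrangian

theorem Nat.add_one_sq_add_pow_three_sub_self {q : ℕ} (hq : 1 < q) :
    (q + 1) ^ 2 + (q ^ 3 - q) = (q ^ 4 - 1) / (q - 1) := by
  refine (Nat.div_eq_of_eq_mul_left (by omega) ?_).symm
  have h₃ : q ≤ q ^ 3 := Nat.le_self_pow (by norm_num) q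
  have h₄ : 1 ≤ q ^ 4 := Nat.one_le_pow _ _ (by omega)
  zify [h₃, h₄, hq.le]
  ring

theorem count_lagrangians_product_and_graphs_general
    (n : ℕ) [Fact n.Prime]
    (V1 V2 : Type) [AddCommGroup V1] [AddCommGroup V2]
    [Module (ZMod n) V1] [Module (ZMod n) V2]
    (hd1 : Module.finrank (ZMod n) V1 = 2) (hd2 : Module.finrank (ZMod n) V2 = 2)
    (e1 : V1 →ₗ[ZMod n] V1 →ₗ[ZMod n] ZMod n)
    (e2 : V2 →ₗ[ZMod n] V2 →ₗ[ZMod n] ZMod n)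
    (halt1 : ∀ v, e1 v v = 0) (halt2 : ∀ v, e2 v v = 0)
    (hnd1 : ∀ v, (∀ w, e1 v w = 0) → v = 0)
    (hnd2 : ∀ v, (∀ w, e2 v w = 0) → v = 0) :
    Nat.card {G : Submodule (ZMod n) (V1 × V2) //
        Module.finrank (ZMod n) G = 2 ∧
        (∀ u ∈ G, ∀ v ∈ G, e1 u.1 v.1 + e2 u.2 v.2 = 0) ∧
        ∃ (C1 : Submodule (ZMod n) V1) (C2 : Submodule (ZMod n) V2),
          G = C1.prod C2}
      = (n + 1) ^ 2 ∧
    Nat.card {G : Submodule (ZMod n) (V1 × V2) //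
        Module.finrank (ZMod n) G = 2 ∧
        (∀ u ∈ G, ∀ v ∈ G, e1 u.1 v.1 + e2 u.2 v.2 = 0) ∧
        ∃ ψ : V1 ≃ₗ[ZMod n] V2,
          (∀ u v, e2 (ψ u) (ψ v) = - e1 u v) ∧
          G = LinearMap.graph (ψ : V1 →ₗ[ZMod n] V2)}
      = n ^ 3 - n ∧
    Nat.card {G : Submodule (ZMod n) (V1 × V2) //
        Module.finrank (ZMod n) G = 2 ∧
        (∀ u ∈ G, ∀ v ∈ G, e1 u.1 v.1 + e2 u.2 v.2 = 0)}
      = (n ^ 4 - 1) / (n - 1) ∧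
    (n + 1) ^ 2 + (n ^ 3 - n) = (n ^ 4 - 1) / (n - 1) := by
  have hq : Nat.card (ZMod n) = n := Nat.card_zmod n
  have hcube : (n ^ 2 - 1) * n = n ^ 3 - n := by rw [Nat.sub_mul, one_mul, ← pow_succ]
  have hsum := Nat.add_one_sq_add_pow_three_sub_self (Fact.out : n.Prime).one_lt
  refine ⟨?_, ?_, ?_, hsum⟩
  · exact (natCard_prod_lagrangians hd1 hd2 halt1 halt2 hnd1 hnd2).trans (by rw [hq])
  · exact (natCard_graph_lagrangians hd1 hd2 halt1 halt2 hnd1 hnd2).trans (by rw [hq, hcube])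
  · exact (natCard_lagrangians hd1 hd2 halt1 halt2 hnd1 hnd2).trans (by rw [hq, hcube, hsum])

/-- counting Lagrangian subspaces of an orthogonal sum `V1 × V2` of
two 2-dimensional symplectic `ℤ/nℤ`-vector spaces: `(n+1)^2` of them are of
product form, `n^3 - n` are graphs of anti-isometries, and the total number is
`(n^4-1)/(n-1)`, which is the sum of the two. -/
theorem count_lagrangians_product_and_graphs
    (n : ℕ) (hn : n.Prime) [Fact n.Prime]
    (V1 V2 : Type) [AddCommGroup V1] [AddCommGroup V2]
    [Module (ZMod n) V1] [Module (ZMod n) V2]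
    (hd1 : Module.finrank (ZMod n) V1 = 2) (hd2 : Module.finrank (ZMod n) V2 = 2)
    (e1 : V1 →ₗ[ZMod n] V1 →ₗ[ZMod n] ZMod n)
    (e2 : V2 →ₗ[ZMod n] V2 →ₗ[ZMod n] ZMod n)
    (halt1 : ∀ v, e1 v v = 0) (halt2 : ∀ v, e2 v v = 0)
    (hnd1 : ∀ v, (∀ w, e1 v w = 0) → v = 0)
    (hnd2 : ∀ v, (∀ w, e2 v w = 0) → v = 0) :
    Nat.card {G : Submodule (ZMod n) (V1 × V2) //
        Module.finrank (ZMod n) G = 2 ∧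
        (∀ u ∈ G, ∀ v ∈ G, e1 u.1 v.1 + e2 u.2 v.2 = 0) ∧
        ∃ (C1 : Submodule (ZMod n) V1) (C2 : Submodule (ZMod n) V2),
          G = C1.prod C2}
      = (n + 1) ^ 2 ∧
    Nat.card {G : Submodule (ZMod n) (V1 × V2) //
        Module.finrank (ZMod n) G = 2 ∧
        (∀ u ∈ G, ∀ v ∈ G, e1 u.1 v.1 + e2 u.2 v.2 = 0) ∧
        ∃ ψ : V1 ≃ₗ[ZMod n] V2,
          (∀ u v, e2 (ψ u) (ψ v) = - e1 u v) ∧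
          G = LinearMap.graph (ψ : V1 →ₗ[ZMod n] V2)}
      = n ^ 3 - n ∧
    Nat.card {G : Submodule (ZMod n) (V1 × V2) //
        Module.finrank (ZMod n) G = 2 ∧
        (∀ u ∈ G, ∀ v ∈ G, e1 u.1 v.1 + e2 u.2 v.2 = 0)}
      = (n ^ 4 - 1) / (n - 1) ∧
    (n + 1) ^ 2 + (n ^ 3 - n) = (n ^ 4 - 1) / (n - 1) :=
  count_lagrangians_product_and_graphs_general n V1 V2 hd1 hd2 e1 e2 halt1 halt2 hnd1 hnd2
end

section
/- Let x be an algebraic integer of degree 4 such that all complex absolute values of x equal sqrt(2) (a Weil 2-number of degree 4), and suppose x is non-real. Then beta = x + 2/x is a totally real quadratic algebraic integer, beta^2 - 8 is totally negative, and the minimal polynomial of x has the form X^4 - a1*X^3 + (4 + a2)*X^2 - 2*a1*X + 4 where a1 = Tr(beta) and a2 = N(beta) are integers. -/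
open Polynomial

/-! Since every root of `p` has absolute value `√2`, complex conjugation acts on the roots as
`z ↦ 2 / z`. Hence `X⁴ p(2/X)` vanishes at `x` and, `p` being irreducible, equals `p(0) · p`;
comparing coefficients, with `p(0) > 0` because `p` has no real root, gives `p(0) = 4` and
`p = X⁴ - a₁X³ + (4 + a₂)X² - 2a₁X + 4`, i.e. `p(w) = w² (β² - a₁β + a₂)` for `β = w + 2/w`.
Every root `z` of `X² - a₁X + a₂` is `w + 2/w = 2 Re w` for a non-real root `w` of `p`, so
`z` is real and `z² < 4|w|² = 8`. -/

open ComplexConjugate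

section Irreducible

variable {K A : Type*} [Field K] [Ring A] [Nontrivial A] [Algebra K A] {f g : K[X]} {z : A}

theorem Irreducible.eq_C_coeff_mul_of_aeval_eq_zero (hf : Irreducible f) (hfm : f.Monic)
    (hfz : aeval z f = 0) (hgz : aeval z g = 0) (hdeg : g.natDegree ≤ f.natDegree) :
    g = C (g.coeff f.natDegree) * f := by
  have hg := eq_leadingCoeff_mul_of_monic_of_dvd_of_natDegree_le hfm
    (minpoly.eq_of_irreducible_of_monic hf hfz hfm ▸ minpoly.dvd K z hgz) hdeg
  have hcoeff : g.coeff f.natDegree = g.leadingCoeff := by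
    nth_rewrite 1 [hg]
    rw [coeff_C_mul, hfm.coeff_natDegree, mul_one]
  rwa [hcoeff]

theorem Irreducible.natDegree_le_of_aeval_eq_zero (hf : Irreducible f) (hfm : f.Monic)
    (hfz : aeval z f = 0) (hg : g ≠ 0) (hgz : aeval z g = 0) :
    f.natDegree ≤ g.natDegree :=
  natDegree_le_natDegree <|
    minpoly.eq_of_irreducible_of_monic hf hfz hfm ▸ minpoly.degree_le_of_ne_zero K z hg hgz

end Irreducible

theorem Irreducible.add_div_ne_ratCast {L : Type*} [Field L] [CharZero L] {f : ℚ[X]}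
    (hf : Irreducible f) (hfm : f.Monic) (hdeg : 2 < f.natDegree) {x : L} (hx0 : x ≠ 0)
    (hfx : aeval x f = 0) (c q : ℚ) : x + c / x ≠ q := by
  intro hq
  have hquad : aeval x (X ^ 2 - C q * X + C c) = 0 := by
    simp only [map_add, map_sub, map_mul, map_pow, aeval_X, aeval_C, eq_ratCast, ← hq]
    field_simp
    ring
  have hmonic : (X ^ 2 - C q * X + C c).Monic := by monicity!
  have hle := hf.natDegree_le_of_aeval_eq_zero hfm hfx hmonic.ne_zero hquad
  have hquad_deg : (X ^ 2 - C q * X + C c).natDegree = 2 := by compute_degree!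
  omega

namespace Polynomial

theorem Monic.eq_X_pow_four_add {R : Type*} [Semiring R] {p : R[X]} (hm : p.Monic)
    (hdeg : p.natDegree = 4) :
    p = X ^ 4 + C (p.coeff 3) * X ^ 3 + C (p.coeff 2) * X ^ 2 + C (p.coeff 1) * X
      + C (p.coeff 0) := by
  conv_lhs => rw [p.as_sum_range' 5 (by omega)]
  have h4 : p.coeff 4 = 1 := hdeg ▸ hm.coeff_natDegree
  simp only [Finset.sum_range_succ, Finset.sum_range_zero, ← C_mul_X_pow_eq_monomial, h4]
  simp only [map_one, pow_zero, pow_one, mul_one, one_mul, zero_add]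
  abel

theorem Monic.eval_pos_of_forall_eval_ne_zero {p : ℝ[X]} (hm : p.Monic)
    (h : ∀ t, p.eval t ≠ 0) (t : ℝ) : 0 < p.eval t := by
  rcases (Nat.eq_zero_or_pos p.natDegree).symm with hdeg | hdeg
  · obtain ⟨T, hT1, htT⟩ := ((tendsto_atTop_of_leadingCoeff_nonneg p
      (natDegree_pos_iff_degree_pos.mp hdeg) (by simp [hm.leadingCoeff])).eventually_ge_atTop 1
      |>.and (Filter.eventually_ge_atTop t)).exists
    by_contra! hneg
    obtain ⟨r, -, hr⟩ := intermediate_value_Icc htT p.continuous.continuousOn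
      ⟨hneg, by linarith⟩
    exact h r hr
  · simp [hm.natDegree_eq_zero.mp hdeg]

theorem coeff_zero_pos_of_forall_im_ne_zero {p : ℤ[X]} (hm : p.Monic)
    (h : ∀ z : ℂ, aeval z p = 0 → z.im ≠ 0) : 0 < p.coeff 0 := by
  have hreal (t : ℝ) : (p.map (algebraMap ℤ ℝ)).eval t ≠ 0 := by
    refine fun ht ↦ h t ?_ (Complex.ofReal_im t)
    rw [← Complex.coe_algebraMap, aeval_algebraMap_apply, ← eval_map_algebraMap, ht, map_zero]
  have := (hm.map (algebraMap ℤ ℝ)).eval_pos_of_forall_eval_ne_zero hreal 0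
  rwa [eval_zero_map, ← coeff_zero_eq_eval_zero, algebraMap_int_eq, eq_intCast,
    Int.cast_pos] at this

theorem reciprocal_quartic_eq_C_coeff_zero_mul {L : Type*} [Field L] [CharZero L] {p : ℤ[X]}
    (hmonic : p.Monic) (hdeg : p.natDegree = 4) (hirr : Irreducible (p.map (algebraMap ℤ ℚ)))
    {x : L} (hx0 : x ≠ 0) (hx : aeval x p = 0) (q : ℤ) (hqx : aeval (q / x) p = 0) :
    C (p.coeff 0) * X ^ 4 + C (q * p.coeff 1) * X ^ 3 + C (q ^ 2 * p.coeff 2) * X ^ 2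
      + C (q ^ 3 * p.coeff 3) * X + C (q ^ 4) = C (p.coeff 0) * p := by
  set Q : ℤ[X] := C (p.coeff 0) * X ^ 4 + C (q * p.coeff 1) * X ^ 3
    + C (q ^ 2 * p.coeff 2) * X ^ 2 + C (q ^ 3 * p.coeff 3) * X + C (q ^ 4)
  have hQx : aeval x Q = x ^ 4 * aeval (q / x) p := by
    conv_rhs => rw [hmonic.eq_X_pow_four_add hdeg]
    simp only [Q, map_add, map_mul, map_pow, aeval_X, aeval_C]
    simp only [algebraMap_int_eq, eq_intCast]
    field_simp
    ring
  have hQ4 : Q.coeff 4 = p.coeff 0 := by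
    simp only [Q, coeff_add, coeff_C_mul, coeff_X_pow, coeff_X, coeff_C]
    norm_num
  have hQ := hirr.eq_C_coeff_mul_of_aeval_eq_zero (z := x) (g := Q.map (algebraMap ℤ ℚ))
    (hmonic.map _) (by rwa [aeval_map_algebraMap])
    (by rw [aeval_map_algebraMap, hQx, hqx, mul_zero])
    (by
      rw [hmonic.natDegree_map, hdeg]
      exact natDegree_map_le.trans (by simp only [Q]; compute_degree))
  rw [hmonic.natDegree_map, hdeg, coeff_map, hQ4, ← map_C, ← Polynomial.map_mul] at hQ
  exact map_injective _ (RingHom.injective_int _) hQ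

theorem aeval_weil_quartic_eq_zero_iff {K : Type*} [Field K] (a1 a2 : ℤ) {w : K} (hw : w ≠ 0) :
    aeval w (X ^ 4 - C a1 * X ^ 3 + C (4 + a2) * X ^ 2 - C (2 * a1) * X + C 4 : ℤ[X]) = 0 ↔
      (w + 2 / w) ^ 2 - a1 * (w + 2 / w) + a2 = 0 := by
  have hfactor : aeval w (X ^ 4 - C a1 * X ^ 3 + C (4 + a2) * X ^ 2 - C (2 * a1) * X + C 4 : ℤ[X])
      = w ^ 2 * ((w + 2 / w) ^ 2 - a1 * (w + 2 / w) + a2) := by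
    simp only [map_add, map_sub, map_mul, map_pow, aeval_X, aeval_C]
    simp only [algebraMap_int_eq, eq_intCast, Int.cast_ofNat]
    field_simp
    ring
  rw [hfactor, mul_eq_zero, or_iff_right (pow_ne_zero 2 hw)]

end Polynomial

namespace Complex

theorem conj_eq_two_div_of_norm_eq_sqrt_two {w : ℂ} (hw : ‖w‖ = √2) : conj w = 2 / w := by
  have hw0 : w ≠ 0 := norm_ne_zero_iff.mp (hw ▸ by positivity)
  rw [eq_div_iff hw0, mul_comm, mul_conj, normSq_eq_norm_sq, hw]
  norm_num

theorem add_two_div_eq_ofReal_of_norm_eq_sqrt_two {w : ℂ} (hw : ‖w‖ = √2) :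
    w + 2 / w = ((2 * w.re : ℝ) : ℂ) := by
  rw [← conj_eq_two_div_of_norm_eq_sqrt_two hw, add_conj]

theorem exists_ne_zero_add_two_div_eq (z : ℂ) : ∃ w ≠ 0, w + 2 / w = z := by
  obtain ⟨s, hs⟩ := IsAlgClosed.exists_pow_nat_eq (z ^ 2 - 8) two_pos
  set w := (z + s) / 2
  have hw : w * (z - w) = 2 := by linear_combination (-1 / 4 : ℂ) * hs
  have hw0 : w ≠ 0 := left_ne_zero_of_mul (hw ▸ two_ne_zero)
  refine ⟨w, hw0, ?_⟩
  rw [← hw, mul_div_cancel_left₀ _ hw0]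
  ring

theorem sq_re_lt_two_of_norm_eq_sqrt_two {w : ℂ} (hw : ‖w‖ = √2) (him : w.im ≠ 0) :
    w.re ^ 2 < 2 := by
  have hnorm : w.re ^ 2 + w.im ^ 2 = 2 := by
    rw [sq, sq, ← normSq_apply, normSq_eq_norm_sq, hw, Real.sq_sqrt zero_le_two]
  linarith [sq_pos_of_ne_zero him]

theorem im_ne_zero_of_irreducible_of_norm_eq_sqrt_two {f : ℚ[X]} (hf : Irreducible f)
    (hfm : f.Monic) (hdeg : 2 < f.natDegree) {z : ℂ} (hz : aeval z f = 0) (hw : ‖z‖ = √2) :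
    z.im ≠ 0 := by
  intro him
  have hz2 : z ^ 2 = 2 := by
    rw [sq]
    nth_rewrite 2 [← conj_eq_iff_im.mpr him]
    rw [mul_conj, normSq_eq_norm_sq, hw]
    norm_num
  have hle := hf.natDegree_le_of_aeval_eq_zero hfm hz (X_pow_sub_C_ne_zero two_pos 2)
    (by simp [hz2])
  rw [natDegree_X_pow_sub_C] at hle
  omega

end Complex

section WeilQuartic

variable {p : ℤ[X]}

theorem im_ne_zero_of_aeval_eq_zero (hmonic : p.Monic) (hdeg : p.natDegree = 4)
    (hirr : Irreducible (p.map (algebraMap ℤ ℚ))) (hweil : ∀ z : ℂ, aeval z p = 0 → ‖z‖ = √2)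
    {z : ℂ} (hz : aeval z p = 0) : z.im ≠ 0 :=
  Complex.im_ne_zero_of_irreducible_of_norm_eq_sqrt_two hirr (hmonic.map _)
    (by rw [hmonic.natDegree_map, hdeg]; norm_num) (by rwa [aeval_map_algebraMap]) (hweil z hz)

theorem exists_eq_weil_quartic (hmonic : p.Monic) (hdeg : p.natDegree = 4)
    (hirr : Irreducible (p.map (algebraMap ℤ ℚ))) (hweil : ∀ z : ℂ, aeval z p = 0 → ‖z‖ = √2)
    {x : ℂ} (hx : aeval x p = 0) :
    ∃ a1 a2 : ℤ, p = X ^ 4 - C a1 * X ^ 3 + C (4 + a2) * X ^ 2 - C (2 * a1) * X + C 4 := by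
  have hx0 : x ≠ 0 := norm_ne_zero_iff.mp (hweil x hx ▸ by positivity)
  have hconj : aeval ((2 : ℤ) / x) p = 0 := by
    rw [Int.cast_ofNat, ← Complex.conj_eq_two_div_of_norm_eq_sqrt_two (hweil x hx),
      ← aeval_map_algebraMap ℝ, aeval_conj, aeval_map_algebraMap, hx, map_zero]
  have hrec := reciprocal_quartic_eq_C_coeff_zero_mul hmonic hdeg hirr hx0 hx 2 hconj
  have h0 : 16 = p.coeff 0 * p.coeff 0 := by
    simpa [-eq_intCast, -map_mul, coeff_X, coeff_C] using congrArg (coeff · 0) hrec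
  have h3 : 2 * p.coeff 1 = p.coeff 0 * p.coeff 3 := by
    simpa [-eq_intCast, -map_mul, coeff_X, coeff_C] using congrArg (coeff · 3) hrec
  have hpos := coeff_zero_pos_of_forall_im_ne_zero hmonic
    fun z ↦ im_ne_zero_of_aeval_eq_zero hmonic hdeg hirr hweil
  have hc0 : p.coeff 0 = 4 := by nlinarith
  have hc1 : p.coeff 1 = 2 * p.coeff 3 := by rw [hc0] at h3; linarith
  refine ⟨-p.coeff 3, p.coeff 2 - 4, ?_⟩
  conv_lhs => rw [hmonic.eq_X_pow_four_add hdeg, hc0, hc1]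
  simp only [map_neg, map_sub, map_add, map_mul, map_ofNat]
  ring

end WeilQuartic

theorem weil_two_number_degree_four_general
    (p : Polynomial ℤ) (hmonic : p.Monic) (hdeg : p.natDegree = 4)
    (hirr : Irreducible (p.map (algebraMap ℤ ℚ)))
    (x : ℂ) (hx : Polynomial.aeval x p = 0)
    (hweil : ∀ z : ℂ, Polynomial.aeval z p = 0 → ‖z‖ = Real.sqrt 2) :
    ∃ a1 a2 : ℤ,
      p = X ^ 4 - C a1 * X ^ 3 + C (4 + a2) * X ^ 2 - C (2 * a1) * X + C 4 ∧
      (x + 2 / x).im = 0 ∧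
      (x + 2 / x) ^ 2 - (a1 : ℂ) * (x + 2 / x) + (a2 : ℂ) = 0 ∧
      (∀ q : ℚ, x + 2 / x ≠ (q : ℂ)) ∧
      -- β is totally real and β² - 8 is totally negative: every conjugate of β
      -- (i.e. every root of X² - a₁X + a₂) is real, with square less than 8
      (∀ z : ℂ, z ^ 2 - (a1 : ℂ) * z + (a2 : ℂ) = 0 → z.im = 0 ∧ z.re ^ 2 < 8) := by
  obtain ⟨a1, a2, hp⟩ := exists_eq_weil_quartic hmonic hdeg hirr hweil hx
  have hroot : ∀ w : ℂ, w ≠ 0 →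
      (aeval w p = 0 ↔ (w + 2 / w) ^ 2 - a1 * (w + 2 / w) + a2 = 0) := fun w hw ↦
    hp ▸ aeval_weil_quartic_eq_zero_iff a1 a2 hw
  have hx0 : x ≠ 0 := norm_ne_zero_iff.mp (hweil x hx ▸ by positivity)
  refine ⟨a1, a2, hp, ?_, (hroot x hx0).mp hx, fun q ↦ ?_, fun z hz ↦ ?_⟩
  · rw [Complex.add_two_div_eq_ofReal_of_norm_eq_sqrt_two (hweil x hx), Complex.ofReal_im]
  · exact_mod_cast hirr.add_div_ne_ratCast (hmonic.map _)
      (by rw [hmonic.natDegree_map, hdeg]; norm_num) hx0 (by rwa [aeval_map_algebraMap]) 2 q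
  · obtain ⟨w, hw0, rfl⟩ := Complex.exists_ne_zero_add_two_div_eq z
    have hw := (hroot w hw0).mpr hz
    have hre := Complex.sq_re_lt_two_of_norm_eq_sqrt_two (hweil w hw)
      (im_ne_zero_of_aeval_eq_zero hmonic hdeg hirr hweil hw)
    rw [Complex.add_two_div_eq_ofReal_of_norm_eq_sqrt_two (hweil w hw), Complex.ofReal_im,
      Complex.ofReal_re]
    exact ⟨rfl, by nlinarith⟩

/-- Let `x` be a non-real Weil 2-number of degree 4 (an algebraic
integer of degree 4 all of whose complex absolute values equal `√2`, given here by
a monic irreducible integer polynomial `p` of degree 4 with root `x`, all of whose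
complex roots have absolute value `√2`). Then `β = x + 2/x` is a totally real
quadratic algebraic integer, `β² - 8` is totally negative, and
`p = X⁴ - a₁X³ + (4+a₂)X² - 2a₁X + 4` where `a₁ = Tr β` and `a₂ = N β` are
integers (so `β² = a₁β - a₂`). -/
theorem weil_two_number_degree_four
    (p : Polynomial ℤ) (hmonic : p.Monic) (hdeg : p.natDegree = 4)
    (hirr : Irreducible (p.map (algebraMap ℤ ℚ)))
    (x : ℂ) (hx : Polynomial.aeval x p = 0)
    (hweil : ∀ z : ℂ, Polynomial.aeval z p = 0 → ‖z‖ = Real.sqrt 2)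
    (hnonreal : x.im ≠ 0) :
    ∃ a1 a2 : ℤ,
      p = X ^ 4 - C a1 * X ^ 3 + C (4 + a2) * X ^ 2 - C (2 * a1) * X + C 4 ∧
      (x + 2 / x).im = 0 ∧
      (x + 2 / x) ^ 2 - (a1 : ℂ) * (x + 2 / x) + (a2 : ℂ) = 0 ∧
      (∀ q : ℚ, x + 2 / x ≠ (q : ℂ)) ∧
      -- β is totally real and β² - 8 is totally negative: every conjugate of β
      -- (i.e. every root of X² - a₁X + a₂) is real, with square less than 8
      (∀ z : ℂ, z ^ 2 - (a1 : ℂ) * z + (a2 : ℂ) = 0 → z.im = 0 ∧ z.re ^ 2 < 8) :=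
  weil_two_number_degree_four_general p hmonic hdeg hirr x hx hweil
end

section
/- Let f = X^4 - a1*X^3 + (4 + a2)*X^2 - 2*a1*X + 4 with integers a1, a2. If x is a root of f with all complex absolute values equal to sqrt(2) and f is irreducible over Q, then beta = x + 2/x satisfies beta^2 = a1*beta - a2 and the real quadratic integer beta satisfies a1^2 - 4*a2 > 0 and (a1 pm sqrt(a1^2-4a2))^2 < 8 for both sign choices; in particular |a1| <= 3 and -7 <= a2 <= 1. -/
open Polynomial

/-!
Write `f = (X² - βX + 2)(X² - β'X + 2)`, where `β, β'` are the roots of `Y² - a₁Y + a₂`.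
Since `|x|² = 2`, `2 / x = conj x`, so `β = x + 2 / x = 2 Re x` is real. It is irrational, for
otherwise `x` would satisfy a rational quadratic, against the irreducibility of `f`; hence the
discriminant `(2β - a₁)²` is positive and not a square. If a real conjugate `ρ` of `β` had
`ρ² ≥ 8`, then `X² - ρX + 2` would have a real root `z`, a root of `f` with `|z| = √2`, so
`z² = 2`, again a rational quadratic. Finally `(8 + a₂)² - 8a₁² = (8 - β²)(8 - β'²) > 0` and
`a₂² = β²β'² < 64` leave finitely many pairs `(a₁, a₂)`, and of those violating the bounds only
`(±3, 2)` survive; they have square discriminant `1`.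
-/
theorem Irreducible.degree_le_of_aeval_eq_zero {K B : Type*} [Field K] [Ring B] [Nontrivial B]
    [Algebra K B] {p q : K[X]} (hp : Irreducible p) {z : B} (hpz : aeval z p = 0)
    (hq : q ≠ 0) (hqz : aeval z q = 0) : p.degree ≤ q.degree := by
  rw [← degree_mul_leadingCoeff_inv p hp.ne_zero, minpoly.eq_of_irreducible hp hpz]
  exact minpoly.degree_le_of_ne_zero K z hq hqz

theorem Complex.add_div_eq_two_mul_re {x : ℂ} {r : ℝ} (hx : ‖x‖ ^ 2 = r) :
    x + r / x = (2 * x.re : ℝ) := by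
  rcases eq_or_ne x 0 with rfl | hx0
  · simp
  rw [← Complex.add_conj, add_right_inj, div_eq_iff hx0, mul_comm, Complex.mul_conj,
    Complex.normSq_eq_norm_sq, hx]

noncomputable def weilQuartic (a b : ℚ) : ℚ[X] :=
  X ^ 4 - C a * X ^ 3 + C (4 + b) * X ^ 2 - C (2 * a) * X + C 4

def IsWeilPolynomial (q : ℝ) (p : ℚ[X]) : Prop :=
  ∀ z : ℂ, aeval z p = 0 → ‖z‖ = √q

namespace weilQuartic

variable {a b : ℚ}

theorem degree_eq : (weilQuartic a b).degree = 4 := by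
  unfold weilQuartic; compute_degree!

@[simp]
theorem aeval_eq {A : Type*} [Field A] [CharZero A] (z : A) :
    aeval z (weilQuartic a b) = z ^ 4 - a * z ^ 3 + (4 + b) * z ^ 2 - 2 * a * z + 4 := by
  simp [weilQuartic]

theorem sq_add_mul_add_ne_zero (hirr : Irreducible (weilQuartic a b)) {z : ℂ}
    (hz : aeval z (weilQuartic a b) = 0) (c d : ℚ) : z ^ 2 + c * z + d ≠ 0 := by
  intro hzq
  have hdeg := hirr.degree_le_of_aeval_eq_zero hz (q := X ^ 2 + C c * X + C d)
    (Monic.ne_zero (by monicity!)) (by simpa using hzq)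
  have hq2 : (X ^ 2 + C c * X + C d : ℚ[X]).degree = 2 := by compute_degree!
  rw [degree_eq, hq2] at hdeg
  exact absurd hdeg (by decide)

theorem ne_zero_of_aeval_eq_zero {z : ℂ} (hz : aeval z (weilQuartic a b) = 0) : z ≠ 0 := by
  rintro rfl
  norm_num at hz

theorem add_two_div_sq {z : ℂ} (hz : aeval z (weilQuartic a b) = 0) :
    (z + 2 / z) ^ 2 = a * (z + 2 / z) - b := by
  have hz0 := ne_zero_of_aeval_eq_zero hz
  rw [aeval_eq] at hz
  field_simp
  linear_combination hz

theorem irrational_of_add_two_div_eq (hirr : Irreducible (weilQuartic a b)) {z : ℂ}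
    (hz : aeval z (weilQuartic a b) = 0) {γ : ℝ} (hγ : z + 2 / z = γ) : Irrational γ := by
  rintro ⟨q, rfl⟩
  have hz0 := ne_zero_of_aeval_eq_zero hz
  apply sq_add_mul_add_ne_zero hirr hz (-q) 2
  rw [Complex.ofReal_ratCast] at hγ
  push_cast
  rw [← hγ]
  field_simp
  ring

theorem sq_lt_eight (hirr : Irreducible (weilQuartic a b))
    (hweil : IsWeilPolynomial 2 (weilQuartic a b)) {ρ : ℝ} (hρ : ρ ^ 2 - a * ρ + b = 0) :
    ρ ^ 2 < 8 := by
  by_contra! h8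
  obtain ⟨z, hz⟩ : ∃ z : ℝ, z ^ 2 - ρ * z + 2 = 0 :=
    ⟨(ρ + √(ρ ^ 2 - 8)) / 2, by nlinarith [Real.sq_sqrt (sub_nonneg.2 h8)]⟩
  have hroot : aeval (z : ℂ) (weilQuartic a b) = 0 := by
    have : z ^ 4 - a * z ^ 3 + (4 + b) * z ^ 2 - 2 * a * z + 4 = 0 := by
      linear_combination (z ^ 2 - (a - ρ) * z + 2) * hz + z ^ 2 * hρ
    rw [aeval_eq]
    exact_mod_cast this
  have hz2 : z ^ 2 = 2 := by
    have := hweil z hroot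
    rw [Complex.norm_real, Real.norm_eq_abs] at this
    rw [← sq_abs, this, Real.sq_sqrt zero_le_two]
  apply sq_add_mul_add_ne_zero hirr hroot 0 (-2)
  push_cast
  exact_mod_cast (by linear_combination hz2 : z ^ 2 + 0 * z + -2 = 0)

end weilQuartic

theorem int_coeff_bounds_of_roots {a1 a2 : ℤ} {p m : ℝ} (hsum : p + m = a1)
    (hprod : p * m = a2) (hp : p ^ 2 < 8) (hm : m ^ 2 < 8) (hD : 0 < a1 ^ 2 - 4 * a2)
    (hD1 : a1 ^ 2 - 4 * a2 ≠ 1) : |a1| ≤ 3 ∧ -7 ≤ a2 ∧ a2 ≤ 1 := by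
  have h8 : 8 * a1 ^ 2 < (8 + a2) ^ 2 := by
    have : ((8 + a2) ^ 2 - 8 * a1 ^ 2 : ℝ) = (8 - p ^ 2) * (8 - m ^ 2) := by
      rw [← hsum, ← hprod]; ring
    have : (8 * a1 ^ 2 : ℝ) < (8 + a2) ^ 2 := by
      nlinarith [mul_pos (sub_pos.2 hp) (sub_pos.2 hm)]
    exact_mod_cast this
  have h64 : a2 ^ 2 < 8 ^ 2 := by
    have : (a2 : ℝ) ^ 2 < 8 ^ 2 := by
      rw [← hprod, mul_pow]
      nlinarith [sq_nonneg p, sq_nonneg m]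
    exact_mod_cast this
  obtain ⟨ha2l, ha2u⟩ := abs_lt_of_sq_lt_sq' h64 (by norm_num)
  obtain ⟨ha1l, ha1u⟩ := abs_lt_of_sq_lt_sq' (by nlinarith : a1 ^ 2 < 6 ^ 2) (by norm_num)
  rw [abs_le]
  interval_cases a1 <;> interval_cases a2 <;> omega

/-- Let `f = X⁴ - a₁X³ + (4+a₂)X² - 2a₁X + 4` with `a₁, a₂ ∈ ℤ`.
If `f` is irreducible over `ℚ` and `x` is a root of `f` all of whose conjugates
have complex absolute value `√2`, then `β = x + 2/x` satisfies `β² = a₁β - a₂`,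
the real quadratic integer `β` has positive discriminant `a₁² - 4a₂ > 0` and both
of its real conjugates `(a₁ ± √(a₁²-4a₂))/2` have square less than 8;
in particular `|a₁| ≤ 3` and `-7 ≤ a₂ ≤ 1`. -/
theorem weil_two_number_quartic_coefficient_bounds
    (a1 a2 : ℤ)
    (hirr : Irreducible
      ((X : Polynomial ℚ) ^ 4 - C (a1 : ℚ) * X ^ 3 + C ((4 + a2 : ℤ) : ℚ) * X ^ 2
        - C ((2 * a1 : ℤ) : ℚ) * X + C 4))
    (x : ℂ)
    (hx : x ^ 4 - (a1 : ℂ) * x ^ 3 + ((4 + a2 : ℤ) : ℂ) * x ^ 2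
        - ((2 * a1 : ℤ) : ℂ) * x + 4 = 0)
    (hweil : ∀ z : ℂ,
      z ^ 4 - (a1 : ℂ) * z ^ 3 + ((4 + a2 : ℤ) : ℂ) * z ^ 2
        - ((2 * a1 : ℤ) : ℂ) * z + 4 = 0 → ‖z‖ = Real.sqrt 2) :
    (x + 2 / x) ^ 2 = (a1 : ℂ) * (x + 2 / x) - (a2 : ℂ) ∧
    (0 : ℝ) < (a1 : ℝ) ^ 2 - 4 * (a2 : ℝ) ∧
    (((a1 : ℝ) + Real.sqrt ((a1 : ℝ) ^ 2 - 4 * (a2 : ℝ))) / 2) ^ 2 < 8 ∧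
    (((a1 : ℝ) - Real.sqrt ((a1 : ℝ) ^ 2 - 4 * (a2 : ℝ))) / 2) ^ 2 < 8 ∧
    |a1| ≤ 3 ∧ -7 ≤ a2 ∧ a2 ≤ 1 := by
  push_cast at hirr hx hweil
  replace hirr : Irreducible (weilQuartic a1 a2) := by simpa [weilQuartic, ← C_mul] using hirr
  have hroot : aeval x (weilQuartic a1 a2) = 0 := by simpa using hx
  have hWeil : IsWeilPolynomial 2 (weilQuartic a1 a2) := fun z hz => hweil z (by simpa using hz)
  have hβ := weilQuartic.add_two_div_sq hroot
  obtain ⟨γ, hγ⟩ : ∃ γ : ℝ, x + 2 / x = γ :=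
    ⟨_, Complex.add_div_eq_two_mul_re (by simp [hWeil x hroot])⟩
  have hδ : Irrational (2 * γ - a1) := by
    simpa using ((weilQuartic.irrational_of_add_two_div_eq hirr hroot hγ).natCast_mul
      two_ne_zero).sub_intCast a1
  have hD : ((a1 ^ 2 - 4 * a2 : ℤ) : ℝ) = (2 * γ - a1) ^ 2 := by
    rw [hγ] at hβ
    push_cast
    linear_combination (-4 : ℝ) * (by exact_mod_cast hβ : γ ^ 2 = a1 * γ - a2)
  have hsq : ∀ k : ℤ, a1 ^ 2 - 4 * a2 ≠ k ^ 2 := by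
    intro k hk
    rw [hk, Int.cast_pow, sq_eq_sq_iff_eq_or_eq_neg] at hD
    obtain h | h := hD
    · exact hδ.ne_int k h.symm
    · exact hδ.ne_int (-k) (by push_cast; linarith)
  have hDpos : 0 < a1 ^ 2 - 4 * a2 :=
    lt_of_le_of_ne (by exact_mod_cast hD ▸ sq_nonneg _) (hsq 0).symm
  have hs := Real.sq_sqrt (by exact_mod_cast hDpos.le : (0 : ℝ) ≤ a1 ^ 2 - 4 * a2)
  have hp := weilQuartic.sq_lt_eight hirr hWeil (ρ := (a1 + √(a1 ^ 2 - 4 * a2)) / 2)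
    (by push_cast; linear_combination hs / 4)
  have hm := weilQuartic.sq_lt_eight hirr hWeil (ρ := (a1 - √(a1 ^ 2 - 4 * a2)) / 2)
    (by push_cast; linear_combination hs / 4)
  refine ⟨by exact_mod_cast hβ, by exact_mod_cast hDpos, hp, hm,
    int_coeff_bounds_of_roots (by ring) (by linear_combination -hs / 4) hp hm hDpos (hsq 1)⟩
end
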